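/- For all integers s ≥ 2 and every i, the sum Σ_{j=0}^{3} (-1)^j · S^{3-j}_{s+j}(i) · T^{j}_{s-3+j}(i+3-j) equals T(i+1)·T(i+s)·S^1_{s+2}(i) - T(i)·T(i+s+1)·T^1_{s-2}(i+2). -/
import Mathlib


variable {R : Type*} [CommRing R]

/-- Discrete polynomials `T^r_s(i)` (case `h = n = 1`), with the convention
`T^0_s = 1` and `T^r_s = 0` for `s = 0`, `r ≥ 1`. -/
def Tp (T : ℤ → R) : ℕ → ℕ → ℤ → R
  | 0, _, _ => 1
  | _ + 1, 0, _ => 0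
  | r + 1, s + 1, i => Tp T (r + 1) s (i + 1) + T i * Tp T r s (i + 2)

/-- Discrete polynomials `S^r_s(i)` (case `h = n = 1`). -/
def Sp (T : ℤ → R) : ℕ → ℕ → ℤ → R
  | 0, _, _ => 1
  | _ + 1, 0, _ => 0
  | r + 1, 1, i => ∏ q ∈ Finset.range (r + 1), T (i + q)
  | r + 1, s + 2, i => Sp T (r + 1) (s + 1) (i + 1) + T (i + r) * Sp T r (s + 2) i
  termination_by r s _ => r + s

def Pq (T : ℤ → R) (s : ℕ) (i : ℤ) : R := ∑ q ∈ Finset.range s, T (i + q)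

lemma Pq_zero (T : ℤ → R) (i : ℤ) : Pq T 0 i = 0 := by simp [Pq]

lemma Pq_succ_right (T : ℤ → R) (s : ℕ) (i : ℤ) :
    Pq T (s + 1) i = Pq T s i + T (i + s) := by
  simp [Pq, Finset.sum_range_succ]

lemma Pq_succ_left (T : ℤ → R) (s : ℕ) (i : ℤ) :
    Pq T (s + 1) i = T i + Pq T s (i + 1) := by
  simp only [Pq, Finset.sum_range_succ']
  rw [add_comm]
  congr 1
  · simp
  · exact Finset.sum_congr rfl fun q _ => by push_cast; ring_nf

lemma Pq_split (T : ℤ → R) (k m : ℕ) (j : ℤ) :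
    Pq T (m + k) j = Pq T k j + Pq T m (j + k) := by
  induction k generalizing j with
  | zero => simp [Pq_zero]
  | succ k ih =>
      rw [show m + (k+1) = (m+k)+1 from rfl, Pq_succ_left, Pq_succ_left, ih (j+1)]
      push_cast
      ring_nf

lemma Pq_shift (T : ℤ → R) (m : ℕ) (j : ℤ) :
    Pq T m (j + 1) = Pq T m j + T (j + m) - T j := by
  have h1 := Pq_succ_left T m j
  have h2 := Pq_succ_right T m j
  rw [h2] at h1
  linear_combination -h1

lemma Sp_one (T : ℤ → R) (s : ℕ) (i : ℤ) : Sp T 1 s i = Pq T s i := by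
  induction s generalizing i with
  | zero => simp [Sp, Pq_zero]
  | succ s ih =>
      match s with
      | 0 => simp [Sp, Pq, Finset.prod_range_succ]
      | s + 1 =>
          rw [show (s+1+1) = s+2 from rfl, Sp, ih,
            show Sp T 0 (s+2) i = (1:R) from by rw [Sp],
            Pq_succ_left T (s+1) i]
          push_cast
          ring

lemma Tp_one (T : ℤ → R) (s : ℕ) (i : ℤ) : Tp T 1 s i = Pq T s i := by
  induction s generalizing i with
  | zero => simp [Tp, Pq_zero]
  | succ s ih =>
      rw [Tp, ih, Pq_succ_left]
      simp [Tp]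
      ring

lemma Sp_two_one (T : ℤ → R) (i : ℤ) : Sp T 2 1 i = T i * T (i + 1) := by
  simp [Sp, Finset.prod_range_succ]

lemma Sp_two_rec (T : ℤ → R) (s : ℕ) (i : ℤ) :
    Sp T 2 (s + 2) i = Sp T 2 (s + 1) (i + 1) + T (i + 1) * Pq T (s + 2) i := by
  rw [Sp, Sp_one]
  norm_num

lemma Tp_two_rec (T : ℤ → R) (s : ℕ) (i : ℤ) :
    Tp T 2 (s + 1) i = Tp T 2 s (i + 1) + T i * Pq T s (i + 2) := by
  rw [Tp, Tp_one]

lemma Sp_three_rec (T : ℤ → R) (s : ℕ) (i : ℤ) :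
    Sp T 3 (s + 2) i = Sp T 3 (s + 1) (i + 1) + T (i + 2) * Sp T 2 (s + 2) i := by
  rw [Sp]
  norm_num

lemma Tp_three_rec (T : ℤ → R) (s : ℕ) (i : ℤ) :
    Tp T 3 (s + 1) i = Tp T 3 s (i + 1) + T i * Tp T 2 s (i + 2) := by
  rw [Tp]

-- level lemma: Sp2(m+1,i) = Sp2(m,i) + T(i+m) * Pq(m+1, i+1)
lemma Sp_two_level (T : ℤ → R) (m : ℕ) (i : ℤ) :
    Sp T 2 (m + 1) i = Sp T 2 m i + T (i + m) * Pq T (m + 1) (i + 1) := by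
  induction m generalizing i with
  | zero =>
      rw [Sp_two_one]
      simp [Sp, Pq, Finset.sum_range_succ]
  | succ m ih =>
      rw [show m + 1 + 1 = m + 2 from rfl, Sp_two_rec, ih (i+1)]
      rcases m with _ | m
      · rw [Sp_two_one]
        simp only [Sp, Pq, Finset.sum_range_succ, Finset.sum_range_zero]
        push_cast
        ring
      · rw [show m + 1 + 1 = m + 2 from rfl, Sp_two_rec]
        have p1 := Pq_succ_right T (m + 2) i
        have p2 := Pq_succ_left T (m + 2) (i + 1)
        push_cast at p1 p2 ⊢
        simp only [show i+1+((m:ℤ)+1) = i+(m:ℤ)+2 by ring, show i+1+(m:ℤ)+1 = i+(m:ℤ)+2 by ring, show i+((m:ℤ)+2) = i+(m:ℤ)+2 by ring, show i+1+1 = i+(2:ℤ) by ring,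
          show (m+1+2 : ℕ) = m+2+1 from rfl] at *
        linear_combination T (i+1) * p1 - T (i + (m:ℤ) + 2) * p2

lemma zn1 (x y : ℤ) : x + (y + 1) = x + y + 1 := by ring
lemma zn2 (x y : ℤ) : x + (y + 2) = x + y + 2 := by ring
lemma zn3 (x y : ℤ) : x + (y + 3) = x + y + 3 := by ring
lemma zn4 (x y : ℤ) : x + (y + 4) = x + y + 4 := by ring
lemma zs11 (x y : ℤ) : x + 1 + y + 1 = x + y + 2 := by ring
lemma zs12 (x y : ℤ) : x + 1 + y + 2 = x + y + 3 := by ring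
lemma zs13 (x y : ℤ) : x + 1 + y + 3 = x + y + 4 := by ring
lemma zs21 (x y : ℤ) : x + 2 + y + 1 = x + y + 3 := by ring
lemma zs22 (x y : ℤ) : x + 2 + y + 2 = x + y + 4 := by ring
lemma zs31 (x y : ℤ) : x + 3 + y + 1 = x + y + 4 := by ring
lemma zc11 (x : ℤ) : x + 1 + 1 = x + 2 := by ring
lemma zc12 (x : ℤ) : x + 1 + 2 = x + 3 := by ring
lemma zc21 (x : ℤ) : x + 2 + 1 = x + 3 := by ring
lemma zc13 (x : ℤ) : x + 1 + 3 = x + 4 := by ring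
lemma zc22 (x : ℤ) : x + 2 + 2 = x + 4 := by ring
lemma zc31 (x : ℤ) : x + 3 + 1 = x + 4 := by ring
lemma zc14 (x : ℤ) : x + 1 + 4 = x + 5 := by ring
lemma zc23 (x : ℤ) : x + 2 + 3 = x + 5 := by ring
lemma zc32 (x : ℤ) : x + 3 + 2 = x + 5 := by ring
lemma zc41 (x : ℤ) : x + 4 + 1 = x + 5 := by ring

-- the r = 2 bracket identity
lemma r2 (T : ℤ → R) (s : ℕ) (i : ℤ) :
    Sp T 2 (s + 1) i + Tp T 2 (s + 1) i =
      T i * T (i + (s : ℤ) + 1) + Pq T (s + 2) i * Pq T s (i + 1) := by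
  induction s generalizing i with
  | zero =>
      rw [Sp_two_one, Tp_two_rec]
      simp [Tp, Pq_zero]
  | succ s ih =>
      rw [show s + 1 + 1 = s + 2 from rfl, Sp_two_rec, Tp_two_rec T (s + 1)]
      have E := ih (i + 1)
      have q1 : Pq T (s + 3) i = T i + Pq T (s + 2) (i + 1) := Pq_succ_left T (s + 2) i
      have q2 : Pq T (s + 2) i = T i + Pq T (s + 1) (i + 1) := Pq_succ_left T (s + 1) i
      have q3 : Pq T (s + 2) (i + 1) = Pq T (s + 1) (i + 1) + T (i + (s : ℤ) + 2) := by
        have h := Pq_succ_right T (s + 1) (i + 1)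
        push_cast at h
        simp only [zn1, zn2, zs11] at h
        exact h
      have q4 : Pq T (s + 1) (i + 2) = Pq T s (i + 2) + T (i + (s : ℤ) + 2) := by
        have h := Pq_succ_right T s (i + 2)
        push_cast at h
        simp only [show i+2+(s:ℤ) = i+(s:ℤ)+2 by ring] at h
        exact h
      have q5 : Pq T (s + 1) (i + 1) = T (i + 1) + Pq T s (i + 2) := by
        have h := Pq_succ_left T s (i + 1)
        simp only [zc11] at h
        exact h
      push_cast at E ⊢
      simp only [zn1, zn2, zs11, zc11] at E ⊢
      linear_combination E - Pq T (s+1) (i+1) * q1 + T (i+1) * q2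
        + (Pq T s (i+2) - Pq T (s+1) (i+1)) * q3 + T i * q4
        + (- Pq T (s+1) (i+1) - T i - T (i + (s:ℤ) + 2)) * q5

lemma key (T : ℤ → R) (n : ℕ) : ∀ i : ℤ,
    Sp T 3 (n + 2) i + Pq T (n + 4) i * Tp T 2 (n + 1) (i + 1)
      - Sp T 2 (n + 3) i * Pq T n (i + 2) - Tp T 3 (n + 2) i =
    T (i + 1) * T (i + (n : ℤ) + 2) * Pq T (n + 4) i
      - T i * T (i + (n : ℤ) + 3) * Pq T n (i + 2) := by
  induction n with
  | zero =>
      intro i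
      simp [Sp, Tp, Pq, Finset.sum_range_succ, Finset.prod_range_succ]
      ring
  | succ n ih =>
      intro i
      simp only [show n+1+2 = n+3 from rfl, show n+1+4 = n+5 from rfl,
        show n+1+3 = n+4 from rfl, show n+1+1 = n+2 from rfl]
      push_cast
      simp only [show i+((n:ℤ)+1)+2 = i+(n:ℤ)+3 by ring, show i+((n:ℤ)+1)+3 = i+(n:ℤ)+4 by ring]
      have e1 : Sp T 3 (n + 3) i = Sp T 3 (n + 2) (i + 1) + T (i + 2) * Sp T 2 (n + 3) i := by
        have h := Sp_three_rec T (n + 1) i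
        simpa [show n+1+2 = n+3 from rfl, show n+1+1 = n+2 from rfl] using h
      have e2 : Tp T 3 (n + 3) i = Tp T 3 (n + 2) (i + 1) + T i * Tp T 2 (n + 2) (i + 2) := by
        have h := Tp_three_rec T (n + 2) i
        simpa [show n+2+1 = n+3 from rfl] using h
      have t1 : Tp T 2 (n + 2) (i + 1) =
          T (i + 1) * T (i + (n : ℤ) + 3) + Pq T (n + 3) (i + 1) * Pq T (n + 1) (i + 2)
            - Sp T 2 (n + 2) (i + 1) := by
        have h := r2 T (n + 1) (i + 1)
        push_cast at h
        simp only [show n+1+1 = n+2 from rfl, show n+1+2 = n+3 from rfl,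
          show i+1+((n:ℤ)+1) = i+(n:ℤ)+2 by ring, show i+1+(n:ℤ)+1 = i+(n:ℤ)+2 by ring,
          show i+(n:ℤ)+2+1 = i+(n:ℤ)+3 by ring,
          show i+1+1 = i+(2:ℤ) by ring, zc11] at h
        linear_combination h
      have t2 : Tp T 2 (n + 2) (i + 2) =
          T (i + 2) * T (i + (n : ℤ) + 4) + Pq T (n + 3) (i + 2) * Pq T (n + 1) (i + 3)
            - Sp T 2 (n + 2) (i + 2) := by
        have h := r2 T (n + 1) (i + 2)
        push_cast at h
        simp only [show n+1+1 = n+2 from rfl, show n+1+2 = n+3 from rfl,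
          show i+2+((n:ℤ)+1) = i+(n:ℤ)+3 by ring, show i+2+(n:ℤ)+1 = i+(n:ℤ)+3 by ring,
          show i+(n:ℤ)+3+1 = i+(n:ℤ)+4 by ring, zc21] at h
        linear_combination h
      have t3 : Tp T 2 (n + 1) (i + 2) =
          T (i + 2) * T (i + (n : ℤ) + 3) + Pq T (n + 2) (i + 2) * Pq T n (i + 3)
            - Sp T 2 (n + 1) (i + 2) := by
        have h := r2 T n (i + 2)
        push_cast at h
        simp only [show i+2+(n:ℤ) = i+(n:ℤ)+2 by ring, show i+(n:ℤ)+2+1 = i+(n:ℤ)+3 by ring,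
          zc21] at h
        linear_combination h
      have f4 : Sp T 2 (n + 1) (i + 2) =
          Sp T 2 (n + 2) (i + 1) - T (i + 2) * Pq T (n + 2) (i + 1) := by
        have h := Sp_two_rec T n (i + 1)
        simp only [zc11] at h
        linear_combination -h
      have f3 : Sp T 2 (n + 2) (i + 2) =
          Sp T 2 (n + 3) (i + 1) - T (i + 2) * Pq T (n + 3) (i + 1) := by
        have h := Sp_two_rec T (n + 1) (i + 1)
        simp only [show n+1+2 = n+3 from rfl, show n+1+1 = n+2 from rfl, zc11] at h
        linear_combination -h
      have f2 : Sp T 2 (n + 2) (i + 1) =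
          Sp T 2 (n + 3) i - T (i + 1) * Pq T (n + 3) i := by
        have h := Sp_two_rec T (n + 1) i
        simp only [show n+1+2 = n+3 from rfl, show n+1+1 = n+2 from rfl] at h
        linear_combination -h
      have f1 : Sp T 2 (n + 3) (i + 1) =
          Sp T 2 (n + 4) i - T (i + 1) * Pq T (n + 4) i := by
        have h := Sp_two_rec T (n + 2) i
        simp only [show n+2+2 = n+4 from rfl, show n+2+1 = n+3 from rfl] at h
        linear_combination -h
      have g1 : Sp T 2 (n + 4) i =
          Sp T 2 (n + 3) i + T (i + (n : ℤ) + 3) * Pq T (n + 4) (i + 1) := by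
        have h := Sp_two_level T (n + 3) i
        push_cast at h
        simp only [show n+3+1 = n+4 from rfl, show i+((n:ℤ)+3) = i+(n:ℤ)+3 by ring] at h
        exact h
      have g2 : Sp T 2 (n + 3) i =
          Sp T 2 (n + 2) i + T (i + (n : ℤ) + 2) * Pq T (n + 3) (i + 1) := by
        have h := Sp_two_level T (n + 2) i
        push_cast at h
        simp only [show n+2+1 = n+3 from rfl, show i+((n:ℤ)+2) = i+(n:ℤ)+2 by ring] at h
        exact h
      have g3 : Sp T 2 (n + 2) i =
          Sp T 2 (n + 1) i + T (i + (n : ℤ) + 1) * Pq T (n + 2) (i + 1) := by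
        have h := Sp_two_level T (n + 1) i
        push_cast at h
        simp only [show n+1+1 = n+2 from rfl, show i+((n:ℤ)+1) = i+(n:ℤ)+1 by ring] at h
        exact h
      have E := ih (i + 1)
      push_cast at E
      simp only [zc11, zc12, show i+1+(n:ℤ)+2 = i+(n:ℤ)+3 by ring,
        show i+1+(n:ℤ)+3 = i+(n:ℤ)+4 by ring] at E
      rw [e1, e2, t1, t2, f3, f2, f1, g1, g2, g3]
      simp only [t3, f4, f2, f1, g1, g2, g3] at E
      have p51 : Pq T (n+5) i = T i + T (i+1) + T (i+2) + T (i+3) + T (i+4) + Pq T n (i+5) := by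
        rw [Pq_split T 5 n i]; push_cast; simp [Pq, Finset.sum_range_succ]; try push_cast; try ring
      have p41 : Pq T (n+4) i = T i + T (i+1) + T (i+2) + T (i+3) + Pq T n (i+4) := by
        rw [Pq_split T 4 n i]; push_cast; simp [Pq, Finset.sum_range_succ]; try push_cast; try ring
      have p42 : Pq T (n+4) (i+1) = T (i+1) + T (i+2) + T (i+3) + T (i+4) + Pq T n (i+5) := by
        rw [Pq_split T 4 n (i+1)]; push_cast; simp [Pq, Finset.sum_range_succ, zc11, zc12, zc13, zc14]; try push_cast; try simp only [zc11, zc12, zc13, zc14]; try ring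
      have p31 : Pq T (n+3) i = T i + T (i+1) + T (i+2) + Pq T n (i+3) := by
        rw [Pq_split T 3 n i]; push_cast; simp [Pq, Finset.sum_range_succ]; try push_cast; try ring
      have p32 : Pq T (n+3) (i+1) = T (i+1) + T (i+2) + T (i+3) + Pq T n (i+4) := by
        rw [Pq_split T 3 n (i+1)]; push_cast; simp [Pq, Finset.sum_range_succ, zc11, zc12, zc13]; try push_cast; try simp only [zc11, zc12, zc13]; try ring
      have p33 : Pq T (n+3) (i+2) = T (i+2) + T (i+3) + T (i+4) + Pq T n (i+5) := by
        rw [Pq_split T 3 n (i+2)]; push_cast; simp [Pq, Finset.sum_range_succ, zc21, zc22, zc23]; try push_cast; try simp only [zc21, zc22, zc23]; try ring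
      have p22 : Pq T (n+2) (i+1) = T (i+1) + T (i+2) + Pq T n (i+3) := by
        rw [Pq_split T 2 n (i+1)]; push_cast; simp [Pq, Finset.sum_range_succ, zc11, zc12]; try push_cast; try simp only [zc11, zc12]; try ring
      have p23 : Pq T (n+2) (i+2) = T (i+2) + T (i+3) + Pq T n (i+4) := by
        rw [Pq_split T 2 n (i+2)]; push_cast; simp [Pq, Finset.sum_range_succ, zc21, zc22]; try push_cast; try simp only [zc21, zc22]; try ring
      have p12 : Pq T (n+1) (i+2) = T (i+2) + Pq T n (i+3) := by
        rw [Pq_split T 1 n (i+2)]; push_cast; simp [Pq, Finset.sum_range_succ, zc21]; try push_cast; try simp only [zc21]; try ring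
      have p13 : Pq T (n+1) (i+3) = T (i+3) + Pq T n (i+4) := by
        rw [Pq_split T 1 n (i+3)]; push_cast; simp [Pq, Finset.sum_range_succ, zc31]; try push_cast; try simp only [zc31]; try ring
      have sh3 : Pq T n (i+3) = Pq T n (i+2) + T (i+(n:ℤ)+2) - T (i+2) := by
        have h := Pq_shift T n (i+2)
        simp only [zc21, show i+2+(n:ℤ) = i+(n:ℤ)+2 by ring] at h
        linear_combination h
      have sh4 : Pq T n (i+4) = Pq T n (i+3) + T (i+(n:ℤ)+3) - T (i+3) := by
        have h := Pq_shift T n (i+3)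
        simp only [zc31, show i+3+(n:ℤ) = i+(n:ℤ)+3 by ring] at h
        linear_combination h
      have sh5 : Pq T n (i+5) = Pq T n (i+4) + T (i+(n:ℤ)+4) - T (i+4) := by
        have h := Pq_shift T n (i+4)
        simp only [zc41, show i+4+(n:ℤ) = i+(n:ℤ)+4 by ring] at h
        linear_combination h
      simp only [p51, p42, p41, p33, p32, p31, p23, p22, p13, p12, sh5, sh4, sh3] at E ⊢
      linear_combination E


/-- Case `r = 3` of Conjecture 1: for all `s ≥ 2`,
`Σ_{j=0}^{3} (-1)^j S^{3-j}_{s+j}(i) T^{j}_{s-3+j}(i+3-j)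
  = T(i+1)·T(i+s)·S^1_{s+2}(i) - T(i)·T(i+s+1)·T^1_{s-2}(i+2)`. -/
theorem ST_bracket_three (T : ℤ → R) (s : ℕ) (hs : 2 ≤ s) (i : ℤ) :
    ∑ j ∈ Finset.range 4,
      (-1 : R) ^ j * Sp T (3 - j) (s + j) i * Tp T j (s + j - 3) (i + 3 - (j : ℤ)) =
      T (i + 1) * T (i + (s : ℤ)) * Sp T 1 (s + 2) i -
        T i * T (i + (s : ℤ) + 1) * Tp T 1 (s - 2) (i + 2) := by

  obtain ⟨n, rfl⟩ : ∃ n, s = n + 2 := ⟨s - 2, by omega⟩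
  rw [Finset.sum_range_succ, Finset.sum_range_succ, Finset.sum_range_succ,
    Finset.sum_range_one]
  norm_num
  rw [show n+3-3 = n from by omega, show n+4-3 = n+1 from by omega,
    show i+3-1 = i+2 by ring, show i+3-2 = i+1 by ring,
    Sp_one, Tp_one, show n+2+1 = n+3 from rfl, show n+2+2 = n+4 from rfl,
    show Sp T 0 (n+2+3) i = (1:R) from by rw [Sp],
    show Tp T 0 (n+2-3) (i+3) = (1:R) from by rw [Tp]]
  push_cast
  simp only [show i+((n:ℤ)+2) = i+(n:ℤ)+2 by ring, show i+((n:ℤ)+2)+1 = i+(n:ℤ)+3 by ring, show i+(n:ℤ)+2+1 = i+(n:ℤ)+3 by ring]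
  have h := key T n i
  push_cast at h
  linear_combination h
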